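/- Let P and Q be probability measures on a measurable space X, let μ > 0, let f* ∈ L²(P) ∩ L¹(Q) with Var_P[f*] > 0, and let R* be the signed measure with dR*/dP = 1 + (μ/2)(f* − E_P[f*]). Set δ := E_Q[f*] − E_P[f*] − (μ/2)·Var_P[f*]. Then ∫ (dR*/dP)² dP = 1 + (E_Q[f*] − E_P[f*] − δ)² / Var_P[f*]. Moreover, if F is a convex symmetric subset of L²(P) ∩ L¹(Q) and f* attains the supremum over f ∈ F of { E_Q[f] − E_P[f] − (μ/4)·Var_P[f] }, then for every f₀ ∈ F, |∫ f₀ dQ − ∫ f₀ dR*| ≤ δ. -/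

import Mathlib

/-!
Writing `c = μ/2` and `a = E_P[f*]`, the weight `1 + c (f* − a)` has `P`-mean one and
`P`-variance `c² Var_P[f*]`, which gives the second moment. For the bias, integrating against the
weight turns `∫ f₀ dR*` into `E_P[f₀] + c·Cov_P(f*, f₀)`, so the bias of `f₀` is the directional
derivative of the dual objective `J(f) = E_Q[f] − E_P[f] − (μ/4) Var_P[f]` at `f*` in
direction `f₀`. Along the segment `f* + t (g − f*)` inside `F`, `J` is a quadratic in `t` maximised
at `t = 0`, so its slope there is nonpositive: the derivative in direction `g` is at most the one in
direction `f*`, which is `δ`. Symmetry of `F` applies this to `±f₀`.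
-/

open MeasureTheory ProbabilityTheory Filter Topology

lemma nonpos_of_forall_mul_le_mul_sq {b c : ℝ} (h : ∀ t : ℝ, 0 < t → t ≤ 1 → b * t ≤ c * t ^ 2) :
    b ≤ 0 := by
  have hlim : Tendsto (fun t : ℝ => c * t) (𝓝[>] 0) (𝓝 0) := by
    simpa using ((continuous_const_mul c).tendsto 0).mono_left nhdsWithin_le_nhds
  refine ge_of_tendsto hlim ?_
  filter_upwards [Ioo_mem_nhdsGT one_pos] with t ⟨ht0, ht1⟩
  have := h t ht0 ht1.le
  nlinarith

section Moments

variable {X : Type*} [MeasurableSpace X] {P : Measure X}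

lemma variance_add_smul [IsFiniteMeasure P] {f h : X → ℝ} (hf : MemLp f 2 P) (hh : MemLp h 2 P)
    (t : ℝ) : Var[f + t • h; P] = Var[f; P] + 2 * t * cov[f, h; P] + t ^ 2 * Var[h; P] := by
  rw [variance_add hf (hh.const_smul t), covariance_smul_right, variance_smul]
  ring

variable [IsProbabilityMeasure P]

lemma variance_eq_integral_sq_sub_sq {f : X → ℝ} (hf : MemLp f 2 P) :
    Var[f; P] = ∫ x, f x ^ 2 ∂P - (∫ x, f x ∂P) ^ 2 := by
  simpa using variance_eq_sub hf

lemma integral_sq_one_add_mul_sub_integral {f : X → ℝ} (hf : MemLp f 2 P) (c : ℝ) :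
    ∫ x, (1 + c * (f x - ∫ y, f y ∂P)) ^ 2 ∂P = 1 + c ^ 2 * Var[f; P] := by
  set w : X → ℝ := fun x => 1 + c * (f x - ∫ y, f y ∂P) with hw_def
  have hw : MemLp w 2 P := by
    have := (memLp_const (μ := P) (1 : ℝ)).add ((hf.sub (memLp_const (∫ y, f y ∂P))).const_mul c)
    exact this
  have hfi : Integrable f P := hf.integrable one_le_two
  have hmean : ∫ x, w x ∂P = 1 := by
    have hc : Integrable (fun x => c * (f x - ∫ y, f y ∂P)) P :=
      (hfi.sub (integrable_const _)).const_mul c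
    rw [hw_def, integral_add (integrable_const _) hc, integral_const_mul,
      integral_sub hfi (integrable_const _)]
    simp
  have hvar : Var[w; P] = c ^ 2 * Var[f; P] := by
    rw [hw_def, variance_const_add (by fun_prop), variance_const_mul,
      variance_sub_const hf.aestronglyMeasurable]
  have := variance_eq_integral_sq_sub_sq hw
  rw [hmean, hvar] at this
  linarith

lemma integral_mul_one_add_mul_sub_integral {f g : X → ℝ} (hf : MemLp f 2 P) (hg : MemLp g 2 P)
    (c : ℝ) :
    ∫ x, g x * (1 + c * (f x - ∫ y, f y ∂P)) ∂P = ∫ x, g x ∂P + c * cov[f, g; P] := by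
  have hfg : Integrable (fun x => c * (f x * g x)) P := (hf.integrable_mul hg).const_mul c
  have hgi : Integrable g P := hg.integrable one_le_two
  have hgc : Integrable (fun x => (c * ∫ y, f y ∂P) * g x) P := hgi.const_mul _
  have e : (fun x => g x * (1 + c * (f x - ∫ y, f y ∂P)))
      = fun x => g x + (c * (f x * g x) - (c * ∫ y, f y ∂P) * g x) := by
    funext x; ring
  rw [e, integral_add hgi (by exact hfg.sub hgc), integral_sub hfg hgc, integral_const_mul,
    integral_const_mul, covariance_eq_sub hf hg]
  simp only [Pi.mul_apply]
  ring

end Moments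

section DualObjective

variable {X : Type*} [MeasurableSpace X] (P Q : Measure X) (κ : ℝ)

noncomputable def dualObjective (f : X → ℝ) : ℝ :=
  ∫ x, f x ∂Q - ∫ x, f x ∂P - κ * Var[f; P]

noncomputable def dualObjectiveDeriv (f h : X → ℝ) : ℝ :=
  ∫ x, h x ∂Q - ∫ x, h x ∂P - 2 * κ * cov[f, h; P]

variable {P Q κ}

lemma dualObjectiveDeriv_neg (f g : X → ℝ) :
    dualObjectiveDeriv P Q κ f (-g) = -dualObjectiveDeriv P Q κ f g := by
  simp only [dualObjectiveDeriv, Pi.neg_apply, integral_neg, covariance_neg_right]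
  ring

variable [IsFiniteMeasure P]

lemma dualObjectiveDeriv_sub {f g h : X → ℝ} (hf : MemLp f 2 P) (hg : MemLp g 2 P)
    (hgQ : Integrable g Q) (hh : MemLp h 2 P) (hhQ : Integrable h Q) :
    dualObjectiveDeriv P Q κ f (g - h)
      = dualObjectiveDeriv P Q κ f g - dualObjectiveDeriv P Q κ f h := by
  simp only [dualObjectiveDeriv, Pi.sub_apply]
  rw [integral_sub hgQ hhQ, integral_sub (hg.integrable one_le_two) (hh.integrable one_le_two),
    covariance_sub_right hf hg hh]
  ring

lemma dualObjective_add_smul {f h : X → ℝ} (hf : MemLp f 2 P) (hfQ : Integrable f Q)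
    (hh : MemLp h 2 P) (hhQ : Integrable h Q) (t : ℝ) :
    dualObjective P Q κ (f + t • h)
      = dualObjective P Q κ f + t * dualObjectiveDeriv P Q κ f h - κ * Var[h; P] * t ^ 2 := by
  simp only [dualObjective, dualObjectiveDeriv, Pi.add_apply, Pi.smul_apply, smul_eq_mul]
  rw [integral_add hfQ (hhQ.const_mul t), integral_add (hf.integrable one_le_two)
    ((hh.integrable one_le_two).const_mul t), integral_const_mul, integral_const_mul,
    variance_add_smul hf hh]
  ring

lemma dualObjectiveDeriv_le_of_isMaxOn {F : Set (X → ℝ)} (hconv : Convex ℝ F)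
    (hF : ∀ f ∈ F, MemLp f 2 P ∧ Integrable f Q) {f₀ g : X → ℝ} (hf₀ : f₀ ∈ F)
    (hmax : IsMaxOn (dualObjective P Q κ) F f₀) (hg : g ∈ F) :
    dualObjectiveDeriv P Q κ f₀ g ≤ dualObjectiveDeriv P Q κ f₀ f₀ := by
  obtain ⟨hf₀P, hf₀Q⟩ := hF f₀ hf₀
  obtain ⟨hgP, hgQ⟩ := hF g hg
  have hslope : dualObjectiveDeriv P Q κ f₀ (g - f₀) ≤ 0 := by
    refine nonpos_of_forall_mul_le_mul_sq (c := κ * Var[g - f₀; P]) fun t ht0 ht1 => ?_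
    have hmem : f₀ + t • (g - f₀) ∈ F := by
      convert hconv hf₀ hg (sub_nonneg.mpr ht1) ht0.le (sub_add_cancel 1 t) using 1
      module
    have := isMaxOn_iff.mp hmax _ hmem
    rw [dualObjective_add_smul hf₀P hf₀Q (hgP.sub hf₀P) (hgQ.sub hf₀Q)] at this
    linarith
  rwa [dualObjectiveDeriv_sub hf₀P hgP hgQ hf₀P hf₀Q, sub_nonpos] at hslope

lemma abs_dualObjectiveDeriv_le_of_isMaxOn {F : Set (X → ℝ)} (hconv : Convex ℝ F)
    (hF : ∀ f ∈ F, MemLp f 2 P ∧ Integrable f Q) (hsymm : ∀ f ∈ F, -f ∈ F) {f₀ g : X → ℝ}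
    (hf₀ : f₀ ∈ F) (hmax : IsMaxOn (dualObjective P Q κ) F f₀) (hg : g ∈ F) :
    |dualObjectiveDeriv P Q κ f₀ g| ≤ dualObjectiveDeriv P Q κ f₀ f₀ := by
  have hneg := dualObjectiveDeriv_le_of_isMaxOn hconv hF hf₀ hmax (hsymm g hg)
  rw [dualObjectiveDeriv_neg] at hneg
  exact abs_le.mpr ⟨by linarith, dualObjectiveDeriv_le_of_isMaxOn hconv hF hf₀ hmax hg⟩

end DualObjective

theorem stmt_5_general {X : Type*} [MeasurableSpace X] (P Q : Measure X)
    [IsProbabilityMeasure P]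
    (μ : ℝ)
    (fstar : X → ℝ) (hfstar2 : MemLp fstar 2 P)
    (EPf EQf VarPf : ℝ)
    (hEPf : EPf = ∫ x, fstar x ∂P) (hEQf : EQf = ∫ x, fstar x ∂Q)
    (hVarPf : VarPf = (∫ x, (fstar x) ^ 2 ∂P) - EPf ^ 2) (hVarpos : 0 < VarPf)
    (wstar : X → ℝ) (hwstar : wstar = fun x => 1 + (μ / 2) * (fstar x - EPf))
    (δ : ℝ) (hδ : δ = EQf - EPf - (μ / 2) * VarPf) :
    -- second moment of the weights
    (∫ x, (wstar x) ^ 2 ∂P) = 1 + (EQf - EPf - δ) ^ 2 / VarPf ∧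
    -- bias bound over the outcome class
    (∀ F : Set (X → ℝ), Convex ℝ F →
      (∀ f ∈ F, MemLp f 2 P ∧ Integrable f Q) →
      (∀ f ∈ F, -f ∈ F) →
      fstar ∈ F →
      (∀ f ∈ F, (∫ x, f x ∂Q) - (∫ x, f x ∂P)
          - (μ / 4) * ((∫ x, (f x) ^ 2 ∂P) - (∫ x, f x ∂P) ^ 2)
        ≤ EQf - EPf - (μ / 4) * VarPf) →
      ∀ f₀ ∈ F, |(∫ x, f₀ x ∂Q) - ∫ x, f₀ x * wstar x ∂P| ≤ δ) := by
  have hVar : VarPf = Var[fstar; P] := by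
    rw [variance_eq_integral_sq_sub_sq hfstar2, hVarPf, hEPf]
  subst hwstar hEPf hEQf hδ
  refine ⟨?_, fun F hconv hF hsymm hfstarF hmax f₀ hf₀ => ?_⟩
  · rw [integral_sq_one_add_mul_sub_integral hfstar2, ← hVar]
    field_simp
    ring
  · have hmax' : IsMaxOn (dualObjective P Q (μ / 4)) F fstar := fun f hf => by
      have := hmax f hf
      rwa [← variance_eq_integral_sq_sub_sq (hF f hf).1, hVar] at this
    have hbias : ∫ x, f₀ x ∂Q - ∫ x, f₀ x * (1 + μ / 2 * (fstar x - ∫ y, fstar y ∂P)) ∂P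
        = dualObjectiveDeriv P Q (μ / 4) fstar f₀ := by
      rw [integral_mul_one_add_mul_sub_integral hfstar2 (hF f₀ hf₀).1, dualObjectiveDeriv]
      ring
    have hδ : dualObjectiveDeriv P Q (μ / 4) fstar fstar
        = ∫ x, fstar x ∂Q - ∫ x, fstar x ∂P - μ / 2 * VarPf := by
      rw [dualObjectiveDeriv, covariance_self hfstar2.aemeasurable, hVar]
      ring
    rw [hbias, ← hδ]
    exact abs_dualObjectiveDeriv_le_of_isMaxOn hconv hF hsymm hfstarF hmax' hf₀

/-- second moment of the balancing weights and the bias bound.  The signed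
measure `R*` with `dR*/dP = 1 + (μ/2)(f* − E_P[f*])` is encoded by this density `wstar`,
so `∫ f dR* = ∫ f·wstar dP`.  With `δ := E_Q[f*] − E_P[f*] − (μ/2)·Var_P[f*]`:
`∫ (dR*/dP)² dP = 1 + (E_Q[f*] − E_P[f*] − δ)²/Var_P[f*]`; moreover if `f*` maximizes the
dual objective over a convex symmetric `F ⊆ L²(P) ∩ L¹(Q)`, then every `f₀ ∈ F` has bias
at most `δ`. -/
theorem stmt_5 {X : Type*} [MeasurableSpace X] (P Q : Measure X)
    [IsProbabilityMeasure P] [IsProbabilityMeasure Q]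
    (μ : ℝ) (hμ : 0 < μ)
    (fstar : X → ℝ) (hfstar2 : MemLp fstar 2 P) (hfstarQ : Integrable fstar Q)
    (EPf EQf VarPf : ℝ)
    (hEPf : EPf = ∫ x, fstar x ∂P) (hEQf : EQf = ∫ x, fstar x ∂Q)
    (hVarPf : VarPf = (∫ x, (fstar x) ^ 2 ∂P) - EPf ^ 2) (hVarpos : 0 < VarPf)
    (wstar : X → ℝ) (hwstar : wstar = fun x => 1 + (μ / 2) * (fstar x - EPf))
    (δ : ℝ) (hδ : δ = EQf - EPf - (μ / 2) * VarPf) :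
    -- second moment of the weights
    (∫ x, (wstar x) ^ 2 ∂P) = 1 + (EQf - EPf - δ) ^ 2 / VarPf ∧
    -- bias bound over the outcome class
    (∀ F : Set (X → ℝ), Convex ℝ F →
      (∀ f ∈ F, MemLp f 2 P ∧ Integrable f Q) →
      (∀ f ∈ F, -f ∈ F) →
      fstar ∈ F →
      (∀ f ∈ F, (∫ x, f x ∂Q) - (∫ x, f x ∂P)
          - (μ / 4) * ((∫ x, (f x) ^ 2 ∂P) - (∫ x, f x ∂P) ^ 2)
        ≤ EQf - EPf - (μ / 4) * VarPf) →
      ∀ f₀ ∈ F, |(∫ x, f₀ x ∂Q) - ∫ x, f₀ x * wstar x ∂P| ≤ δ) :=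
  stmt_5_general P Q μ fstar hfstar2 EPf EQf VarPf hEPf hEQf hVarPf hVarpos wstar hwstar δ hδ
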